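/- The power graph and the enhanced power graph of a group G are equal if and only if G does not have a subgroup isomorphic to ℤ or to C_p × C_q for distinct primes p and q. -/

import Mathlib

open Subgroup

/-- The power graph of a group: `x ~ y` iff `x ≠ y` and one is a power of the other. -/
def powGraph (G : Type*) [Group G] : SimpleGraph G where
  Adj x y := x ≠ y ∧ (x ∈ zpowers y ∨ y ∈ zpowers x)
  symm := ⟨by rintro x y ⟨h1, h2⟩; exact ⟨h1.symm, h2.symm⟩⟩
  loopless := ⟨by rintro x ⟨h1, _⟩; exact h1 rfl⟩

/-- The enhanced power graph: `x ~ y` iff `x ≠ y` and `⟨x, y⟩` is cyclic. -/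
def epowGraph (G : Type*) [Group G] : SimpleGraph G where
  Adj x y := x ≠ y ∧ IsCyclic (closure ({x, y} : Set G))
  symm := ⟨by
    rintro x y ⟨h1, h2⟩
    refine ⟨h1.symm, ?_⟩
    rwa [Set.pair_comm y x]⟩
  loopless := ⟨by rintro x ⟨h1, _⟩; exact h1 rfl⟩

/-- The commuting graph: `x ~ y` iff `x ≠ y` and `x y = y x`. -/
def comGraph (G : Type*) [Group G] : SimpleGraph G where
  Adj x y := x ≠ y ∧ x * y = y * x
  symm := ⟨by rintro x y ⟨h1, h2⟩; exact ⟨h1.symm, h2.symm⟩⟩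
  loopless := ⟨by rintro x ⟨h1, _⟩; exact h1 rfl⟩

/-- `G` has a subgroup isomorphic to `H`. -/
def HasSubgroupIso (G : Type*) [Group G] (H : Type*) [Group H] : Prop :=
  ∃ K : Subgroup G, Nonempty (K ≃* H)

/-! Both adjacencies only relate elements of a common cyclic subgroup `⟨c⟩` (a pair generates a
cyclic group iff it lies in some `⟨c⟩`), so the graphs agree iff in every `⟨c⟩` any two cyclic
subgroups are nested. The cyclic subgroups of `⟨c⟩` are the `⟨c ^ d⟩` with `d ∣ orderOf c`
(where `orderOf c = 0` for infinite order), and `⟨c ^ d⟩ ≤ ⟨c ^ e⟩` iff `e ∣ d`. Hence the graphs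
agree iff the divisors of every `orderOf c` form a chain, i.e. iff no `orderOf c` is divisible by
a product `p * q` of distinct primes; this fails exactly when some element has infinite order
(`⟨c⟩ ≃ ℤ`) or order `p * q` (`⟨c⟩ ≃ C_p × C_q` by the Chinese remainder theorem). -/

theorem Nat.dvd_or_dvd_of_dvd_prime_pow {p k d e : ℕ} (hp : p.Prime) (hd : d ∣ p ^ k)
    (he : e ∣ p ^ k) : d ∣ e ∨ e ∣ d := by
  obtain ⟨i, -, rfl⟩ := (Nat.dvd_prime_pow hp).1 hd
  obtain ⟨j, -, rfl⟩ := (Nat.dvd_prime_pow hp).1 he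
  exact (le_total i j).imp (Nat.pow_dvd_pow p) (Nat.pow_dvd_pow p)

theorem Nat.forall_dvd_or_dvd_iff_forall_prime_mul_dvd {n : ℕ} :
    (∀ d e, d ∣ n → e ∣ n → d ∣ e ∨ e ∣ d) ↔
      ∀ p q, p.Prime → q.Prime → p * q ∣ n → p = q := by
  constructor
  · intro h p q hp hq hpq
    rcases h p q (dvd_of_mul_right_dvd hpq) (dvd_of_mul_left_dvd hpq) with hd | hd
    · exact (Nat.prime_dvd_prime_iff_eq hp hq).1 hd
    · exact ((Nat.prime_dvd_prime_iff_eq hq hp).1 hd).symm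
  · intro h d e hd he
    have hn : n ≠ 0 := by
      rintro rfl
      exact absurd (h 2 3 Nat.prime_two Nat.prime_three (dvd_zero _)) (by norm_num)
    rcases eq_or_ne n 1 with rfl | hn1
    · exact Or.inl ((Nat.dvd_one.1 hd).symm ▸ one_dvd e)
    have hp := Nat.minFac_prime hn1
    have hpow : n = n.minFac ^ n.primeFactorsList.length := by
      refine Nat.eq_prime_pow_of_unique_prime_dvd hn fun {q} hq hqn => ?_
      by_contra hne
      exact hne (h q _ hq hp
        (((Nat.coprime_primes hq hp).2 hne).mul_dvd_of_dvd_of_dvd hqn n.minFac_dvd))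
    rw [hpow] at hd he
    exact Nat.dvd_or_dvd_of_dvd_prime_pow hp hd he

namespace Subgroup

variable {G : Type*} [Group G]

theorem isCyclic_closure_pair_iff {x y : G} :
    IsCyclic (closure ({x, y} : Set G)) ↔ ∃ c, x ∈ zpowers c ∧ y ∈ zpowers c := by
  constructor
  · intro h
    obtain ⟨c, hc⟩ := (closure _).isCyclic_iff_exists_zpowers_eq_top.1 h
    exact ⟨c, hc ▸ subset_closure (Set.mem_insert x {y}),
      hc ▸ subset_closure (Set.mem_insert_of_mem x rfl)⟩
  · rintro ⟨c, hx, hy⟩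
    exact isCyclic_of_le
      ((closure_le _).2 (Set.insert_subset_iff.2 ⟨hx, Set.singleton_subset_iff.2 hy⟩))

theorem pow_mem_zpowers_pow_iff {c : G} {d e : ℕ} (he : e ∣ orderOf c) :
    c ^ d ∈ zpowers (c ^ e) ↔ e ∣ d := by
  rw [mem_zpowers_iff]
  refine ⟨fun ⟨k, hk⟩ => ?_, fun ⟨m, hm⟩ => ⟨m, by rw [hm, pow_mul, zpow_natCast]⟩⟩
  have hsub : c ^ ((d : ℤ) - e * k) = 1 := by
    rw [zpow_sub, zpow_mul, zpow_natCast, zpow_natCast, hk, mul_inv_cancel]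
  have := (Int.natCast_dvd_natCast.2 he).trans (orderOf_dvd_iff_zpow_eq_one.2 hsub)
  exact Int.natCast_dvd_natCast.1 ((dvd_sub_left (dvd_mul_right _ _)).1 this)

theorem zpowers_pow_eq_zpowers_pow_gcd (c : G) (a : ℕ) :
    zpowers (c ^ a) = zpowers (c ^ (orderOf c).gcd a) := by
  refine le_antisymm (zpowers_le.2 ?_) (zpowers_le.2 (mem_zpowers_iff.2 ⟨(orderOf c).gcdB a, ?_⟩))
  · exact (pow_mem_zpowers_pow_iff (Nat.gcd_dvd_left _ _)).2 (Nat.gcd_dvd_right _ _)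
  · rw [← zpow_natCast c ((orderOf c).gcd a), Nat.gcd_eq_gcd_ab, zpow_add, zpow_mul, zpow_natCast,
      pow_orderOf_eq_one, one_zpow, one_mul, zpow_mul, zpow_natCast]

theorem forall_mem_zpowers_or_iff_forall_dvd_or_dvd (c : G) :
    (∀ x ∈ zpowers c, ∀ y ∈ zpowers c, x ∈ zpowers y ∨ y ∈ zpowers x) ↔
      ∀ d e, d ∣ orderOf c → e ∣ orderOf c → d ∣ e ∨ e ∣ d := by
  constructor
  · intro h d e hd he
    rcases h _ (npow_mem_zpowers c d) _ (npow_mem_zpowers c e) with h' | h'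
    · exact Or.inr ((pow_mem_zpowers_pow_iff he).1 h')
    · exact Or.inl ((pow_mem_zpowers_pow_iff hd).1 h')
  · intro h x hx y hy
    obtain ⟨a, ha⟩ := (le_zpowers_iff c _).1 (zpowers_le.2 hx)
    obtain ⟨b, hb⟩ := (le_zpowers_iff c _).1 (zpowers_le.2 hy)
    rw [zpowers_pow_eq_zpowers_pow_gcd] at ha hb
    rw [← zpowers_le, ← zpowers_le, ha, hb, zpowers_le, zpowers_le,
      pow_mem_zpowers_pow_iff (Nat.gcd_dvd_left _ _),
      pow_mem_zpowers_pow_iff (Nat.gcd_dvd_left _ _)]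
    exact (h _ _ (Nat.gcd_dvd_left _ _) (Nat.gcd_dvd_left _ _)).symm

end Subgroup

theorem epowGraph_adj_iff {G : Type*} [Group G] {x y : G} :
    (epowGraph G).Adj x y ↔ x ≠ y ∧ ∃ c, x ∈ zpowers c ∧ y ∈ zpowers c :=
  and_congr_right fun _ => isCyclic_closure_pair_iff

theorem powGraph_eq_epowGraph_iff_forall_zpowers {G : Type*} [Group G] :
    powGraph G = epowGraph G ↔
      ∀ c : G, ∀ x ∈ zpowers c, ∀ y ∈ zpowers c, x ∈ zpowers y ∨ y ∈ zpowers x := by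
  constructor
  · intro h c x hx y hy
    rcases eq_or_ne x y with rfl | hne
    · exact Or.inl (mem_zpowers x)
    · have hadj := epowGraph_adj_iff.2 ⟨hne, c, hx, hy⟩
      rw [← h] at hadj
      exact hadj.2
  · intro h
    ext x y
    rw [epowGraph_adj_iff]
    refine and_congr_right fun _ => ⟨?_, ?_⟩
    · rintro (hxy | hyx)
      exacts [⟨y, hxy, mem_zpowers y⟩, ⟨x, mem_zpowers x, hyx⟩]
    · rintro ⟨c, hx, hy⟩
      exact h c x hx y hy

theorem hasSubgroupIso_congr_right {G H H' : Type*} [Group G] [Group H] [Group H']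
    (e : H ≃* H') : HasSubgroupIso G H ↔ HasSubgroupIso G H' :=
  ⟨fun ⟨K, ⟨f⟩⟩ => ⟨K, ⟨f.trans e⟩⟩, fun ⟨K, ⟨f⟩⟩ => ⟨K, ⟨f.trans e.symm⟩⟩⟩

theorem hasSubgroupIso_zmod_iff {G : Type*} [Group G] (n : ℕ) :
    HasSubgroupIso G (Multiplicative (ZMod n)) ↔ ∃ g : G, orderOf g = n := by
  constructor
  · rintro ⟨K, ⟨e⟩⟩
    refine ⟨e.symm (.ofAdd 1), ?_⟩
    rw [Subgroup.orderOf_coe, MulEquiv.orderOf_eq, orderOf_ofAdd_eq_addOrderOf,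
      ZMod.addOrderOf_one]
  · rintro ⟨g, rfl⟩
    refine ⟨zpowers g, ⟨?_⟩⟩
    rw [← Nat.card_zpowers]
    exact (zmodCyclicMulEquiv inferInstance).symm

theorem hasSubgroupIso_int_iff {G : Type*} [Group G] :
    HasSubgroupIso G (Multiplicative ℤ) ↔ ∃ g : G, orderOf g = 0 :=
  hasSubgroupIso_zmod_iff 0

theorem hasSubgroupIso_zmod_prod_iff {G : Type*} [Group G] {p q : ℕ} (h : p.Coprime q) :
    HasSubgroupIso G (Multiplicative (ZMod p × ZMod q)) ↔ ∃ g : G, orderOf g = p * q :=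
  (hasSubgroupIso_congr_right (ZMod.chineseRemainder h).toAddEquiv.toMultiplicative).symm.trans
    (hasSubgroupIso_zmod_iff _)

theorem hasSubgroupIso_int_or_zmod_prod_iff {G : Type*} [Group G] :
    (HasSubgroupIso G (Multiplicative ℤ) ∨ ∃ p q : ℕ, p.Prime ∧ q.Prime ∧ p ≠ q ∧
        HasSubgroupIso G (Multiplicative (ZMod p × ZMod q))) ↔
      ∃ c : G, ∃ p q : ℕ, p.Prime ∧ q.Prime ∧ p * q ∣ orderOf c ∧ p ≠ q := by
  constructor
  · rintro (h | ⟨p, q, hp, hq, hne, h⟩)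
    · obtain ⟨c, hc⟩ := hasSubgroupIso_int_iff.1 h
      exact ⟨c, 2, 3, Nat.prime_two, Nat.prime_three, hc ▸ dvd_zero _, by norm_num⟩
    · obtain ⟨c, hc⟩ := (hasSubgroupIso_zmod_prod_iff ((Nat.coprime_primes hp hq).2 hne)).1 h
      exact ⟨c, p, q, hp, hq, hc ▸ dvd_rfl, hne⟩
  · rintro ⟨c, p, q, hp, hq, hdvd, hne⟩
    rcases eq_or_ne (orderOf c) 0 with h0 | h0
    · exact Or.inl (hasSubgroupIso_int_iff.2 ⟨c, h0⟩)
    · refine Or.inr ⟨p, q, hp, hq, hne, ?_⟩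
      exact (hasSubgroupIso_zmod_prod_iff ((Nat.coprime_primes hp hq).2 hne)).2
        ⟨_, orderOf_pow_orderOf_div h0 hdvd⟩

theorem powGraph_eq_epowGraph_iff {G : Type*} [Group G] :
    powGraph G = epowGraph G ↔
      ¬ (HasSubgroupIso G (Multiplicative ℤ) ∨
        ∃ p q : ℕ, p.Prime ∧ q.Prime ∧ p ≠ q ∧
          HasSubgroupIso G (Multiplicative (ZMod p × ZMod q))) := by
  rw [hasSubgroupIso_int_or_zmod_prod_iff, powGraph_eq_epowGraph_iff_forall_zpowers]
  simp only [forall_mem_zpowers_or_iff_forall_dvd_or_dvd,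
    Nat.forall_dvd_or_dvd_iff_forall_prime_mul_dvd, not_exists, not_and, not_not]
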